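/- If C is a cycle and η, ξ ∈ C, then Φ(η, ξ) ≤ max_C H < min_{∂C} H; i.e., any two states in a cycle communicate by a path staying inside the cycle, of height at most max_C H. -/

import Mathlib

open SimpleGraph

variable {Ω : Type*}

/-- The height of a walk: the maximum of the energy `H` along its support. -/
noncomputable def walkHeight (H : Ω → ℝ) {G : SimpleGraph Ω} {a b : Ω} (w : G.Walk a b) : ℝ :=
  (w.support.map H).foldr max (H b)

/-- The communication height between two vertices: minimal height over all paths. -/
noncomputable def commHeight (G : SimpleGraph Ω) (H : Ω → ℝ) (a b : Ω) : ℝ :=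
  sInf {h : ℝ | ∃ w : G.Walk a b, walkHeight H w = h}

/-- Outer boundary of a set of vertices. -/
def outerBoundary (G : SimpleGraph Ω) (A : Set Ω) : Set Ω :=
  {ξ | ξ ∉ A ∧ ∃ η ∈ A, G.Adj ξ η}

/-- A (nontrivial) cycle: nonempty, connected, proper, with `max_C H < min_{∂C} H`. -/
def IsCycleSet (G : SimpleGraph Ω) (H : Ω → ℝ) (C : Set Ω) : Prop :=
  C.Nonempty ∧ (G.induce C).Connected ∧ C ≠ Set.univ ∧
    ∀ η ∈ C, ∀ ξ ∈ outerBoundary G C, H η < H ξ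

/-- A stable plateau: nonempty, connected, constant energy, strictly higher on the boundary. -/
def IsStablePlateau (G : SimpleGraph Ω) (H : Ω → ℝ) (P : Set Ω) : Prop :=
  P.Nonempty ∧ (G.induce P).Connected ∧ (∀ x ∈ P, ∀ y ∈ P, H x = H y) ∧
    ∀ x ∈ P, ∀ ζ ∈ outerBoundary G P, H x < H ζ

/-- Communication height between two sets. -/
noncomputable def commHeightSet (G : SimpleGraph Ω) (H : Ω → ℝ) (A B : Set Ω) : ℝ :=
  sInf {h : ℝ | ∃ a ∈ A, ∃ b ∈ B, commHeight G H a b = h}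

/-- The bottom of a set: the minimizers of `H` on it. -/
def bottom (H : Ω → ℝ) (C : Set Ω) : Set Ω := {x ∈ C | ∀ y ∈ C, H x ≤ H y}

/-- `A` is a connected component of `S`: a maximal nonempty connected subset of `S`. -/
def IsConnectedComponentOf (G : SimpleGraph Ω) (S A : Set Ω) : Prop :=
  A ⊆ S ∧ A.Nonempty ∧ (G.induce A).Connected ∧
    ∀ B : Set Ω, A ⊆ B → B ⊆ S → (G.induce B).Connected → B = A

/-!
A walk from `η` to `ξ` inside `C`, which exists since `C` is connected, has height at most
`max_C H`. The strict inequality is the cycle condition once both extrema are attained (`Ω` is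
finite); connectedness of the whole graph together with `C ≠ Ω` makes `∂C` nonempty, so that
`sInf (H '' ∂C)` is not the junk value `sInf ∅ = 0`.
-/

section

variable {G : SimpleGraph Ω}

theorem outerBoundary_nonempty {C : Set Ω} (hG : G.Connected) (hne : C.Nonempty)
    (hC : C ≠ Set.univ) : (outerBoundary G C).Nonempty := by
  obtain ⟨a, ha⟩ := hne
  obtain ⟨v, hv⟩ := (Set.ne_univ_iff_exists_notMem C).mp hC
  obtain ⟨d, -, hd, hd'⟩ := (hG.preconnected a v).some.exists_boundary_dart C ha hv
  exact ⟨d.snd, hd', d.fst, hd, d.adj.symm⟩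

variable (H : Ω → ℝ)

theorem walkHeight_cons {u v w : Ω} (h : G.Adj u v) (p : G.Walk v w) :
    walkHeight H (Walk.cons h p) = max (H u) (walkHeight H p) :=
  rfl

theorem le_walkHeight {a b x : Ω} {w : G.Walk a b} (hx : x ∈ w.support) :
    H x ≤ walkHeight H w :=
  List.le_max_of_le' _ (List.mem_map_of_mem hx) le_rfl

theorem walkHeight_le {a b : Ω} {w : G.Walk a b} {M : ℝ} (h : ∀ x ∈ w.support, H x ≤ M) :
    walkHeight H w ≤ M := by
  induction w with
  | nil => exact max_le (h _ (List.mem_singleton_self _)) (h _ (List.mem_singleton_self _))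
  | cons _ _ ih =>
    rw [walkHeight_cons]
    exact max_le (h _ (List.mem_cons_self ..))
      (ih fun x hx => h x (List.mem_cons_of_mem _ hx))

theorem commHeight_le_walkHeight {a b : Ω} (w : G.Walk a b) :
    commHeight G H a b ≤ walkHeight H w :=
  csInf_le ⟨H b, by rintro _ ⟨w, rfl⟩; exact le_walkHeight H w.end_mem_support⟩ ⟨w, rfl⟩

theorem commHeight_le_sSup_of_induce_preconnected {C : Set Ω} (hC : (G.induce C).Preconnected)
    (hbdd : BddAbove (H '' C)) {a b : Ω} (ha : a ∈ C) (hb : b ∈ C) :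
    commHeight G H a b ≤ sSup (H '' C) := by
  obtain ⟨p⟩ := hC ⟨a, ha⟩ ⟨b, hb⟩
  refine (commHeight_le_walkHeight H (p.map (Embedding.induce C).toHom)).trans
    (walkHeight_le H fun x hx => ?_)
  rw [Walk.support_map] at hx
  obtain ⟨y, -, rfl⟩ := List.mem_map.mp hx
  exact le_csSup hbdd (Set.mem_image_of_mem H y.2)

theorem IsCycleSet.sSup_lt_sInf_outerBoundary [Finite Ω] {C : Set Ω} (hG : G.Connected)
    (hC : IsCycleSet G H C) : sSup (H '' C) < sInf (H '' outerBoundary G C) := by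
  obtain ⟨hne, -, hproper, hlt⟩ := hC
  have hB := outerBoundary_nonempty hG hne hproper
  rw [(Set.toFinite _).csSup_lt_iff (hne.image H)]
  rintro _ ⟨x, hx, rfl⟩
  rw [(Set.toFinite _).lt_csInf_iff (hB.image H)]
  rintro _ ⟨y, hy, rfl⟩
  exact hlt x hx y hy

end

/-- two states in a cycle communicate below the boundary level. -/
theorem commHeight_within_cycle [Fintype Ω] (G : SimpleGraph Ω) (hG : G.Connected)
    (H : Ω → ℝ) (C : Set Ω) (hC : IsCycleSet G H C)
    (η : Ω) (hη : η ∈ C) (ξ : Ω) (hξ : ξ ∈ C) :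
    commHeight G H η ξ ≤ sSup (H '' C) ∧ sSup (H '' C) < sInf (H '' outerBoundary G C) :=
  ⟨commHeight_le_sSup_of_induce_preconnected H hC.2.1.preconnected
      (Set.toFinite _).bddAbove hη hξ,
    hC.sSup_lt_sInf_outerBoundary H hG⟩
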